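/- Let 1 ≤ a < b ≤ ∞ and 1 ≤ c < d ≤ ∞, let ψ ∈ GΨ(a,b) and ν ∈ GΨ(c,d) be generating functions, let f : (0,1) → ℝ be measurable with ‖f‖_{Gψ(a,b)} < ∞ and let S : (0,1) → [0,∞) be nonnegative integrable with ‖S‖_{Gν(c,d)} < ∞. Then ‖f‖_{[S]} := ∫₀¹ f*(t) S(t) dt ≤ ζ · ‖f‖_{Gψ(a,b)} · ‖S‖_{Gν(c,d)}, where ζ = ζ(a,b;c,d) := inf{ ψ(p) · ν(p') : p ∈ (a,b), p' = p/(p−1) ∈ (c,d) } (with the convention inf over the empty set equals +∞). -/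

import Mathlib

/-! For each admissible `p` with conjugate exponent `p'`, Hölder's inequality gives
`∫ f* S ≤ ‖f*‖_p ‖S‖_{p'}`. Since `f*(t) > σ` forces `t ≤ |{|f| > σ}|`, the superlevel sets of
`f*` are no larger than those of `|f|`, and the layer-cake formula turns this into
`‖f*‖_p ≤ ‖f‖_p`. Finally `‖f‖_p ≤ ψ(p) ‖f‖_{Gψ}` and `‖S‖_{p'} ≤ ν(p') ‖S‖_{Gν}` straight from the
definition of the grand norms; take the infimum over `p`. -/

open MeasureTheory Real Set
open scoped ENNReal

/-- The nonincreasing rearrangement of a measurable function `f` on `(0,1)` (with Lebesgue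
measure): `f*(t) = inf{σ > 0 : d_f(σ) < t}`. -/
noncomputable def rearr (f : ℝ → ℝ) (t : ℝ) : ℝ :=
  sInf {σ : ℝ | 0 < σ ∧ ((volume.restrict (Set.Ioo (0:ℝ) 1)) {x | σ ≤ |f x|}).toReal < t}

/-- The Grand Lebesgue Space norm `‖f‖_{Gψ(a,b)} = sup_{p ∈ (a,b)} ‖f‖_{L_p} / ψ(p)`
(the upper endpoint `b` may be `∞`). -/
noncomputable def glsNorm {Ω : Type*} [MeasurableSpace Ω] (μ : Measure Ω)
    (a : ℝ) (b : ℝ≥0∞) (ψ : ℝ → ℝ) (f : Ω → ℝ) : ℝ≥0∞ :=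
  ⨆ (p : ℝ) (_ : a < p ∧ ENNReal.ofReal p < b),
    eLpNorm f (ENNReal.ofReal p) μ / ENNReal.ofReal (ψ p)

open Filter Topology

local notation "μ₁" => volume.restrict (Ioo (0:ℝ) 1)

section Rearrangement

lemma rearr_nonneg (f : ℝ → ℝ) (t : ℝ) : 0 ≤ rearr f t :=
  Real.sInf_nonneg fun _ hσ ↦ hσ.1.le

variable {f : ℝ → ℝ}

lemma rearr_le_of_measure_lt {t σ : ℝ} (hσ : 0 < σ) (h : (μ₁ {x | σ ≤ |f x|}).toReal < t) :
    rearr f t ≤ σ :=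
  csInf_le ⟨0, fun _ hσ ↦ hσ.1.le⟩ ⟨hσ, h⟩

lemma rearr_of_nonpos {t : ℝ} (ht : t ≤ 0) : rearr f t = 0 := by
  unfold rearr
  convert Real.sInf_empty
  exact eq_empty_of_forall_notMem fun σ hσ ↦ (ENNReal.toReal_nonneg.trans_lt hσ.2).not_ge ht

lemma exists_measure_le_abs_lt (hf : Measurable f) {t : ℝ} (ht : 0 < t) :
    ∃ σ, 0 < σ ∧ (μ₁ {x | σ ≤ |f x|}).toReal < t := by
  have hlim : Tendsto (fun σ : ℝ ↦ μ₁ {x | σ ≤ |f x|}) atTop (𝓝 0) := by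
    have hempty : ⋂ σ : ℝ, {x | σ ≤ |f x|} = ∅ :=
      eq_empty_of_forall_notMem fun x hx ↦
        (lt_add_one |f x|).not_ge (mem_iInter.1 hx (|f x| + 1))
    simpa [Function.comp_def, hempty] using tendsto_measure_iInter_atTop (μ := μ₁)
      (s := fun σ : ℝ ↦ {x | σ ≤ |f x|})
      (fun σ ↦ (measurableSet_le measurable_const hf.abs).nullMeasurableSet)
      (fun σ σ' h x hx ↦ h.trans hx) ⟨0, measure_ne_top _ _⟩
  obtain ⟨σ, hσ, hlt⟩ := ((eventually_gt_atTop 0).and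
    (hlim.eventually (gt_mem_nhds (ENNReal.ofReal_pos.2 ht)))).exists
  exact ⟨σ, hσ, ENNReal.toReal_lt_of_lt_ofReal hlt⟩

lemma rearr_antitoneOn (hf : Measurable f) : AntitoneOn (rearr f) (Ioi 0) := by
  intro t ht t' _ htt'
  obtain ⟨σ, hσ⟩ := exists_measure_le_abs_lt hf ht
  exact csInf_le_csInf ⟨0, fun _ hσ ↦ hσ.1.le⟩ ⟨σ, hσ⟩ fun σ hσ ↦ ⟨hσ.1, hσ.2.trans_le htt'⟩

lemma aemeasurable_rearr (hf : Measurable f) : AEMeasurable (rearr f) μ₁ :=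
  aemeasurable_restrict_of_antitoneOn measurableSet_Ioo
    ((rearr_antitoneOn hf).mono Ioo_subset_Ioi_self)

lemma setOf_lt_rearr_subset {σ : ℝ} (hσ : 0 ≤ σ) :
    {t | σ < rearr f t} ⊆ Icc 0 (μ₁ {x | σ < |f x|}).toReal := by
  intro t ht
  obtain ⟨σ', hσσ', hσ't⟩ := exists_between (show σ < rearr f t from ht)
  have ht' : t ≤ (μ₁ {x | σ' ≤ |f x|}).toReal :=
    not_lt.1 fun h ↦ (rearr_le_of_measure_lt (hσ.trans_lt hσσ') h).not_gt hσ't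
  have ht0 : 0 ≤ t := le_of_not_gt fun h ↦ by
    rw [rearr_of_nonpos h.le] at hσ't
    linarith
  exact ⟨ht0, ht'.trans <| ENNReal.toReal_mono (measure_ne_top _ _) (measure_mono fun x hx ↦ hσσ'.trans_le hx)⟩

lemma measure_lt_rearr_le {σ : ℝ} (hσ : 0 ≤ σ) :
    μ₁ {t | σ < rearr f t} ≤ μ₁ {x | σ < |f x|} :=
  calc μ₁ {t | σ < rearr f t} ≤ μ₁ (Icc 0 (μ₁ {x | σ < |f x|}).toReal) :=
        measure_mono (setOf_lt_rearr_subset hσ)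
    _ ≤ volume (Icc 0 (μ₁ {x | σ < |f x|}).toReal) := Measure.restrict_le_self _
    _ = μ₁ {x | σ < |f x|} := by
        rw [Real.volume_Icc, sub_zero, ENNReal.ofReal_toReal (measure_ne_top _ _)]

lemma eLpNorm_rearr_le (hf : Measurable f) {p : ℝ} (hp : 0 < p) :
    eLpNorm (rearr f) (.ofReal p) μ₁ ≤ eLpNorm f (.ofReal p) μ₁ := by
  have hp' : ENNReal.ofReal p ≠ 0 := by simpa using hp
  simp only [eLpNorm_eq_lintegral_rpow_enorm_toReal hp' ENNReal.ofReal_ne_top,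
    ENNReal.toReal_ofReal hp.le, Real.enorm_eq_ofReal_abs,
    ENNReal.ofReal_rpow_of_nonneg (abs_nonneg _) hp.le, abs_of_nonneg (rearr_nonneg f _),
    ENNReal.ofReal_rpow_of_nonneg (rearr_nonneg f _) hp.le]
  gcongr 1
  rw [lintegral_rpow_eq_lintegral_meas_lt_mul _ (.of_forall (rearr_nonneg f))
      (aemeasurable_rearr hf) hp,
    lintegral_rpow_eq_lintegral_meas_lt_mul _ (.of_forall fun x ↦ abs_nonneg (f x))
      hf.abs.aemeasurable hp]
  refine mul_le_mul_right (setLIntegral_mono' measurableSet_Ioi fun σ hσ ↦ ?_) _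
  exact mul_le_mul_left (measure_lt_rearr_le (le_of_lt hσ)) _

end Rearrangement

lemma lintegral_enorm_mul_le_eLpNorm_mul_eLpNorm {α E F : Type*} [MeasurableSpace α]
    [NormedAddCommGroup E] [NormedAddCommGroup F] {μ : Measure α} {p q : ℝ}
    (hpq : p.HolderConjugate q) {f : α → E} {g : α → F} (hf : AEStronglyMeasurable f μ)
    (hg : AEStronglyMeasurable g μ) :
    ∫⁻ x, ‖f x‖ₑ * ‖g x‖ₑ ∂μ ≤ eLpNorm f (.ofReal p) μ * eLpNorm g (.ofReal q) μ := by
  rw [eLpNorm_eq_lintegral_rpow_enorm_toReal (by simpa using hpq.pos) ENNReal.ofReal_ne_top,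
    eLpNorm_eq_lintegral_rpow_enorm_toReal (by simpa using hpq.symm.pos) ENNReal.ofReal_ne_top,
    ENNReal.toReal_ofReal hpq.nonneg, ENNReal.toReal_ofReal hpq.symm.nonneg]
  exact ENNReal.lintegral_mul_le_Lp_mul_Lq μ hpq hf.enorm hg.enorm

lemma lintegral_rearr_mul_le {f S : ℝ → ℝ} (hf : Measurable f) (hS : AEStronglyMeasurable S μ₁)
    {p q : ℝ} (hpq : p.HolderConjugate q) :
    ∫⁻ t in Ioo 0 1, ENNReal.ofReal (rearr f t * S t) ≤
      eLpNorm f (.ofReal p) μ₁ * eLpNorm S (.ofReal q) μ₁ :=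
  calc ∫⁻ t in Ioo 0 1, ENNReal.ofReal (rearr f t * S t)
      ≤ ∫⁻ t in Ioo 0 1, ‖rearr f t‖ₑ * ‖S t‖ₑ :=
        lintegral_mono fun t ↦ (Real.ofReal_le_enorm _).trans (enorm_mul _ _).le
    _ ≤ eLpNorm (rearr f) (.ofReal p) μ₁ * eLpNorm S (.ofReal q) μ₁ :=
        lintegral_enorm_mul_le_eLpNorm_mul_eLpNorm hpq
          (aemeasurable_rearr hf).aestronglyMeasurable hS
    _ ≤ eLpNorm f (.ofReal p) μ₁ * eLpNorm S (.ofReal q) μ₁ := by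
        gcongr
        exact eLpNorm_rearr_le hf hpq.pos

lemma eLpNorm_le_ofReal_mul_glsNorm {Ω : Type*} [MeasurableSpace Ω] (μ : Measure Ω)
    {a : ℝ} {b : ℝ≥0∞} {ψ : ℝ → ℝ} (g : Ω → ℝ) {p : ℝ} (hp : a < p ∧ ENNReal.ofReal p < b)
    (hψp : 0 < ψ p) :
    eLpNorm g (.ofReal p) μ ≤ ENNReal.ofReal (ψ p) * glsNorm μ a b ψ g := by
  rw [mul_comm, ← ENNReal.div_le_iff (by simpa using hψp) ENNReal.ofReal_ne_top]
  exact le_iSup₂ (f := fun p (_ : a < p ∧ ENNReal.ofReal p < b) ↦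
    eLpNorm g (.ofReal p) μ / ENNReal.ofReal (ψ p)) p hp

lemma eLpNorm_eq_zero_of_glsNorm_eq_zero {Ω : Type*} [MeasurableSpace Ω] {μ : Measure Ω}
    {a : ℝ} {b : ℝ≥0∞} {ψ : ℝ → ℝ} {g : Ω → ℝ} {p : ℝ} (hp : a < p ∧ ENNReal.ofReal p < b)
    (h : glsNorm μ a b ψ g = 0) :
    eLpNorm g (.ofReal p) μ = 0 := by
  have hle : eLpNorm g (.ofReal p) μ / ENNReal.ofReal (ψ p) ≤ glsNorm μ a b ψ g :=
    le_iSup₂ (f := fun p (_ : a < p ∧ ENNReal.ofReal p < b) ↦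
      eLpNorm g (.ofReal p) μ / ENNReal.ofReal (ψ p)) p hp
  rw [h, nonpos_iff_eq_zero, ENNReal.div_eq_zero_iff] at hle
  exact hle.resolve_right ENNReal.ofReal_ne_top

lemma exists_lt_ofReal_lt {a : ℝ} {b : ℝ≥0∞} (h : ENNReal.ofReal a < b) :
    ∃ p, a < p ∧ ENNReal.ofReal p < b := by
  obtain ⟨p, -, hap, hpb⟩ := ENNReal.lt_iff_exists_real_btwn.1 h
  exact ⟨p, (ENNReal.ofReal_lt_ofReal_iff'.1 hap).1, hpb⟩

theorem stmt6_general (a : ℝ) (b : ℝ≥0∞) (c : ℝ) (d : ℝ≥0∞)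
    (ha : 1 ≤ a) (hab : ENNReal.ofReal a < b) (hc : 1 ≤ c) (hcd : ENNReal.ofReal c < d)
    (ψ ν : ℝ → ℝ)
    (hψ : ∃ ε > (0:ℝ), ∀ p : ℝ, a < p → ENNReal.ofReal p < b → ε ≤ ψ p)
    (hν : ∃ ε > (0:ℝ), ∀ q : ℝ, c < q → ENNReal.ofReal q < d → ε ≤ ν q)
    (f S : ℝ → ℝ) (hf : Measurable f) (hS : Measurable S)
    (hfG : glsNorm (volume.restrict (Set.Ioo (0:ℝ) 1)) a b ψ f < ⊤)
    (hSG : glsNorm (volume.restrict (Set.Ioo (0:ℝ) 1)) c d ν S < ⊤) :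
    ∫⁻ t in Set.Ioo (0:ℝ) 1, ENNReal.ofReal (rearr f t * S t) ≤
      (⨅ (p : ℝ) (_ : a < p ∧ ENNReal.ofReal p < b ∧
          c < p / (p - 1) ∧ ENNReal.ofReal (p / (p - 1)) < d),
        ENNReal.ofReal (ψ p * ν (p / (p - 1)))) *
      glsNorm (volume.restrict (Set.Ioo (0:ℝ) 1)) a b ψ f *
      glsNorm (volume.restrict (Set.Ioo (0:ℝ) 1)) c d ν S := by
  obtain ⟨εψ, hεψ, hψ⟩ := hψ
  obtain ⟨εν, hεν, hν⟩ := hν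
  have hSm := hS.aestronglyMeasurable (μ := μ₁)
  rw [mul_assoc]
  set F := glsNorm μ₁ a b ψ f
  set G := glsNorm μ₁ c d ν S
  rcases eq_or_ne (F * G) 0 with hFG | hFG
  · -- the admissible set may be empty, and then the right side is `⊤ * 0 = 0`
    refine le_trans ?_ zero_le
    rcases mul_eq_zero.1 hFG with hF | hG
    · obtain ⟨p, hp⟩ := exists_lt_ofReal_lt hab
      simpa [eLpNorm_eq_zero_of_glsNorm_eq_zero hp hF] using
        lintegral_rearr_mul_le hf hSm (.conjExponent (ha.trans_lt hp.1))
    · obtain ⟨q, hq⟩ := exists_lt_ofReal_lt hcd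
      simpa [eLpNorm_eq_zero_of_glsNorm_eq_zero hq hG] using
        lintegral_rearr_mul_le hf hSm (.symm (.conjExponent (hc.trans_lt hq.1)))
  simp only [ENNReal.iInf_mul_of_ne hFG (ENNReal.mul_ne_top hfG.ne hSG.ne)]
  refine le_iInf₂ fun p ⟨hpa, hpb, hqc, hqd⟩ ↦ ?_
  have hψp : 0 < ψ p := hεψ.trans_le (hψ p hpa hpb)
  calc _ ≤ eLpNorm f (.ofReal p) μ₁ * eLpNorm S (.ofReal (p / (p - 1))) μ₁ :=
        lintegral_rearr_mul_le hf hSm (.conjExponent (ha.trans_lt hpa))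
    _ ≤ ENNReal.ofReal (ψ p) * F * (ENNReal.ofReal (ν (p / (p - 1))) * G) := by
        gcongr
        · exact eLpNorm_le_ofReal_mul_glsNorm μ₁ f ⟨hpa, hpb⟩ hψp
        · exact eLpNorm_le_ofReal_mul_glsNorm μ₁ S ⟨hqc, hqd⟩ (hεν.trans_le (hν _ hqc hqd))
    _ = ENNReal.ofReal (ψ p * ν (p / (p - 1))) * (F * G) := by
        rw [ENNReal.ofReal_mul hψp.le]; ring

/-- for generating functions `ψ ∈ GΨ(a,b)`, `ν ∈ GΨ(c,d)`, a measurable `f` on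
`(0,1)` with finite `Gψ` norm and a nonnegative integrable `S` with finite `Gν` norm,
`‖f‖_{[S]} = ∫₀¹ f*(t) S(t) dt ≤ ζ · ‖f‖_{Gψ(a,b)} · ‖S‖_{Gν(c,d)}`, where
`ζ = inf{ψ(p)·ν(p') : p ∈ (a,b), p' = p/(p-1) ∈ (c,d)}` (inf over the empty set `= +∞`). -/
theorem stmt6 (a : ℝ) (b : ℝ≥0∞) (c : ℝ) (d : ℝ≥0∞)
    (ha : 1 ≤ a) (hab : ENNReal.ofReal a < b) (hc : 1 ≤ c) (hcd : ENNReal.ofReal c < d)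
    (ψ ν : ℝ → ℝ) (hψm : Measurable ψ) (hνm : Measurable ν)
    (hψ : ∃ ε > (0:ℝ), ∀ p : ℝ, a < p → ENNReal.ofReal p < b → ε ≤ ψ p)
    (hν : ∃ ε > (0:ℝ), ∀ q : ℝ, c < q → ENNReal.ofReal q < d → ε ≤ ν q)
    (f S : ℝ → ℝ) (hf : Measurable f) (hS : Measurable S) (hS0 : ∀ t, 0 ≤ S t)
    (hSint : IntegrableOn S (Set.Ioo 0 1) volume)
    (hfG : glsNorm (volume.restrict (Set.Ioo (0:ℝ) 1)) a b ψ f < ⊤)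
    (hSG : glsNorm (volume.restrict (Set.Ioo (0:ℝ) 1)) c d ν S < ⊤) :
    ∫⁻ t in Set.Ioo (0:ℝ) 1, ENNReal.ofReal (rearr f t * S t) ≤
      (⨅ (p : ℝ) (_ : a < p ∧ ENNReal.ofReal p < b ∧
          c < p / (p - 1) ∧ ENNReal.ofReal (p / (p - 1)) < d),
        ENNReal.ofReal (ψ p * ν (p / (p - 1)))) *
      glsNorm (volume.restrict (Set.Ioo (0:ℝ) 1)) a b ψ f *
      glsNorm (volume.restrict (Set.Ioo (0:ℝ) 1)) c d ν S :=
  stmt6_general a b c d ha hab hc hcd ψ ν hψ hν f S hf hS hfG hSG
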